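/- arXiv:math/0405316 — 10 statements merged into one kernel-verified Lean document; each statement's English description precedes it below -/
import Mathlib

section
/- For natural numbers n, k, l with k ≤ n, l ≤ n and k ≠ l, the alternative Legendre polynomials satisfy the orthogonality relation ∫₀¹ 𝒫_{n,k}(x) · 𝒫_{n,l}(x) dx = 0. -/
open Polynomial

/-- The alternative Legendre polynomial `𝒫_{n,k}`. -/
noncomputable def ALP (n k : ℕ) : Polynomial ℝ :=
  ∑ j ∈ Finset.range (n - k + 1),
    Polynomial.C ((-1 : ℝ) ^ j * ((n - k).choose j) * ((n + k + 1 + j).choose (n - k))) *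
      Polynomial.X ^ (k + j)

/-!
Since `𝒫_{n,l}` is a combination of the monomials `x^m` with `l ≤ m ≤ n`, it suffices to show
`∫₀¹ 𝒫_{n,k}(x) x^m dx = 0` for `k < m ≤ n`. With `a = n - k` this integral is
`∑_j (-1)^j C(a,j) C(n+k+1+j, a) / (m+k+1+j)`. Now `a! C(n+k+1+j, a)` is the falling factorial
`(n+k+1+j)(n+k+j)⋯(2k+2+j)`, one of whose factors is `m+k+1+j`; so the summand is
`(-1)^j C(a,j) Q(j) / a!` for a polynomial `Q` of degree `a - 1`, and the alternating sum is the
`a`-th forward difference of `Q`, which vanishes.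
-/

open Finset

theorem Polynomial.sum_range_neg_one_pow_mul_choose_mul_eval_add {R : Type*} [CommRing R]
    {P : R[X]} {a : ℕ} (hP : P.natDegree < a) (y : R) :
    ∑ j ∈ range (a + 1), (-1 : R) ^ j * a.choose j * P.eval (y + j) = 0 := by
  have h := congr_fun (P.fwdDiff_iter_eq_zero_of_degree_lt hP) y
  rw [fwdDiff_iter_eq_sum_shift, Pi.zero_apply] at h
  calc ∑ j ∈ range (a + 1), (-1 : R) ^ j * a.choose j * P.eval (y + j)
      = (-1) ^ a * ∑ j ∈ range (a + 1),
          ((-1 : ℤ) ^ (a - j) * a.choose j) • P.eval (y + j • (1 : R)) := by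
        rw [mul_sum]
        refine sum_congr rfl fun j hj => ?_
        obtain ⟨i, rfl⟩ := Nat.exists_eq_add_of_le (Nat.lt_succ_iff.mp (mem_range.mp hj))
        simp only [Nat.add_sub_cancel_left, zsmul_eq_mul, nsmul_eq_mul, mul_one]
        push_cast
        have hsign : (-1 : R) ^ (j + i) * (-1) ^ i = (-1) ^ j := by
          rw [pow_add, mul_assoc, ← pow_add, ← two_mul, pow_mul, neg_one_sq, one_pow, mul_one]
        rw [← hsign]
        ring
    _ = 0 := by rw [h, mul_zero]

theorem Polynomial.eval_divByMonic_X_sub_C {K : Type*} [Field K] {p : K[X]} {r x : K}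
    (hr : p.IsRoot r) (hx : x ≠ r) : (p /ₘ (X - C r)).eval x = p.eval x / (x - r) := by
  rw [eq_div_iff (sub_ne_zero.mpr hx)]
  conv_rhs => rw [← mul_divByMonic_eq_iff_isRoot.mpr hr]
  simp only [eval_mul, eval_sub, eval_X, eval_C, mul_comm]

theorem sum_neg_one_pow_mul_choose_mul_choose_div_eq_zero {n k m : ℕ} (hkm : k < m)
    (hmn : m ≤ n) :
    ∑ j ∈ range (n - k + 1), (-1 : ℝ) ^ j * (n - k).choose j * (n + k + 1 + j).choose (n - k) /
      (m + k + j + 1) = 0 := by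
  set a := n - k
  set Q := descPochhammer ℝ a /ₘ (X - C ((n - m : ℕ) : ℝ))
  have hroot : (descPochhammer ℝ a).IsRoot ((n - m : ℕ) : ℝ) := by
    rw [IsRoot, descPochhammer_eval_eq_descFactorial, Nat.cast_eq_zero,
      Nat.descFactorial_eq_zero_iff_lt]
    omega
  have hQ : Q.natDegree < a := by
    rw [natDegree_divByMonic _ (monic_X_sub_C _), descPochhammer_natDegree, natDegree_X_sub_C]
    omega
  have hterm (j : ℕ) : ((n + k + 1 + j).choose a : ℝ) / (m + k + j + 1)
      = (a.factorial : ℝ)⁻¹ * Q.eval (((n + k + 1 : ℕ) : ℝ) + j) := by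
    have hne : ((n + k + 1 : ℕ) : ℝ) + j ≠ ((n - m : ℕ) : ℝ) := by
      push_cast [Nat.cast_sub hmn]
      linarith [(Nat.cast_nonneg j : (0 : ℝ) ≤ j), (Nat.cast_nonneg m : (0 : ℝ) ≤ m)]
    rw [eval_divByMonic_X_sub_C hroot hne, ← Nat.cast_add (n + k + 1) j,
      descPochhammer_eval_eq_descFactorial, Nat.descFactorial_eq_factorial_mul_choose]
    push_cast [Nat.cast_sub hmn]
    rw [show (n + k + 1 + j - (n - m) : ℝ) = m + k + j + 1 by ring]
    field_simp
  calc ∑ j ∈ range (a + 1), (-1 : ℝ) ^ j * a.choose j * (n + k + 1 + j).choose a /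
        (m + k + j + 1)
      = (a.factorial : ℝ)⁻¹ * ∑ j ∈ range (a + 1),
          (-1 : ℝ) ^ j * a.choose j * Q.eval (((n + k + 1 : ℕ) : ℝ) + j) := by
        rw [mul_sum]
        refine sum_congr rfl fun j _ => ?_
        rw [mul_div_assoc, hterm]
        ring
    _ = 0 := by rw [sum_range_neg_one_pow_mul_choose_mul_eval_add hQ, mul_zero]

theorem integral_eval_ALP_mul_pow (n k m : ℕ) :
    ∫ x in (0 : ℝ)..1, (ALP n k).eval x * x ^ m
      = ∑ j ∈ range (n - k + 1),
          (-1 : ℝ) ^ j * (n - k).choose j * (n + k + 1 + j).choose (n - k) / (m + k + j + 1) := by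
  simp only [ALP, eval_finsetSum, eval_mul, eval_C, eval_pow, eval_X, sum_mul]
  rw [intervalIntegral.integral_finsetSum fun j _ => by
    apply Continuous.intervalIntegrable; fun_prop]
  refine sum_congr rfl fun j _ => ?_
  simp_rw [mul_assoc _ (_ ^ _) (_ ^ _), ← pow_add]
  rw [intervalIntegral.integral_const_mul, integral_pow, one_pow,
    zero_pow (Nat.succ_ne_zero _), sub_zero]
  push_cast
  ring

theorem integral_eval_ALP_mul_pow_eq_zero {n k m : ℕ} (hkm : k < m) (hmn : m ≤ n) :
    ∫ x in (0 : ℝ)..1, (ALP n k).eval x * x ^ m = 0 := by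
  rw [integral_eval_ALP_mul_pow, sum_neg_one_pow_mul_choose_mul_choose_div_eq_zero hkm hmn]

theorem integral_eval_ALP_mul_eval_ALP_of_lt {n k l : ℕ} (hkl : k < l) (hl : l ≤ n) :
    ∫ x in (0 : ℝ)..1, (ALP n k).eval x * (ALP n l).eval x = 0 := by
  rw [ALP.eq_1 n l]
  simp only [eval_finsetSum, eval_mul, eval_C, eval_pow, eval_X, mul_sum]
  rw [intervalIntegral.integral_finsetSum fun i _ => by
    apply Continuous.intervalIntegrable; fun_prop]
  refine sum_eq_zero fun i hi => ?_
  simp_rw [mul_left_comm _ _ (_ ^ _)]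
  rw [intervalIntegral.integral_const_mul,
    integral_eval_ALP_mul_pow_eq_zero (by omega) (by have := mem_range.mp hi; omega), mul_zero]

/-- Orthogonality of the alternative Legendre polynomials. -/
theorem ALP_orthogonal (n k l : ℕ) (hk : k ≤ n) (hl : l ≤ n) (hkl : k ≠ l) :
    ∫ x in (0:ℝ)..1, (ALP n k).eval x * (ALP n l).eval x = 0 := by
  rcases hkl.lt_or_gt with h | h
  · exact integral_eval_ALP_mul_eval_ALP_of_lt h hl
  · simpa only [mul_comm] using integral_eval_ALP_mul_eval_ALP_of_lt h hk
end

section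
/- For natural numbers n and k with k ≤ n, the alternative Legendre polynomial satisfies the normalization ∫₀¹ 𝒫_{n,k}(x)² dx = 1/(2k+1). -/
/-!
Put `m = n - k` and `𝒫_{n,k} = ∑ⱼ aⱼ xᵏ⁺ʲ`. Then `∫₀¹ 𝒫² = ∑ᵢ aᵢ ∑ⱼ aⱼ / (c + j)` with
`c = 2k + 1 + i`, and the inner sum is, up to sign, the `m`-th forward difference at `c` of
`q(x) / x`, where `q(x) = C(x + m - i, m)` is a polynomial of degree `m`. Writing
`q(x) / x = q(0) / x + r(x)` with `deg r < m`, the difference kills `r`, and the `m`-th difference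
of `1 / x` is `(-1)ᵐ m! / ∏_{t ≤ m} (x + t)`. As `q(0) = C(m - i, m)` vanishes for `0 < i ≤ m`, only
`i = 0` survives, and `a₀ m! / ∏_{t ≤ m} (2k + 1 + t) = 1 / (2k + 1)`.
-/

open Polynomial

open Finset Nat fwdDiff

section FiniteDifferences

variable {R : Type*} [CommRing R]

lemma sum_alternating_choose_eq_fwdDiff_iter (f : R → R) (m : ℕ) (y : R) :
    ∑ j ∈ range (m + 1), (-1) ^ j * m.choose j * f (y + j) = (-1) ^ m * (Δ_[1])^[m] f y := by
  rw [fwdDiff_iter_eq_sum_shift, mul_sum]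
  refine sum_congr rfl fun j hj => ?_
  have hsign : (-1 : R) ^ m * (-1) ^ (m - j) = (-1) ^ j := by
    obtain ⟨d, rfl⟩ := Nat.exists_eq_add_of_le (mem_range_succ_iff.mp hj)
    rw [Nat.add_sub_cancel_left, pow_add, mul_assoc, ← pow_add, Even.neg_one_pow ⟨d, rfl⟩,
      mul_one]
  rw [zsmul_eq_mul, nsmul_one, ← mul_assoc]
  push_cast
  rw [← mul_assoc, hsign]

lemma sum_alternating_choose_eval_eq_zero {p : R[X]} {m : ℕ} (hp : p.degree < m) (y : R) :
    ∑ j ∈ range (m + 1), (-1) ^ j * m.choose j * p.eval (y + j) = 0 := by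
  rcases eq_or_ne p 0 with rfl | hp0
  · simp
  rw [sum_alternating_choose_eq_fwdDiff_iter (fun x => p.eval x),
    fwdDiff_iter_eq_zero_of_degree_lt ((natDegree_lt_iff_degree_lt hp0).mpr hp), Pi.zero_apply,
    mul_zero]

variable {K : Type*} [Field K]

lemma fwdDiff_iter_inv (m : ℕ) {c : K} (hc : ∀ t : ℕ, c + t ≠ 0) :
    (Δ_[1])^[m] (fun x : K => x⁻¹) c = (-1) ^ m * m ! / ∏ t ∈ range (m + 1), (c + t) := by
  induction m generalizing c with
  | zero => simp
  | succ m ih =>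
    have hc' : ∀ t : ℕ, c + 1 + t ≠ 0 := fun t => by
      convert hc (t + 1) using 1; push_cast; ring
    have hprod : ∀ l, ∏ t ∈ range (l + 1), (c + t) = c * ∏ t ∈ range l, (c + 1 + t) := fun l => by
      rw [prod_range_succ', mul_comm, Nat.cast_zero, add_zero]
      exact congrArg _ (prod_congr rfl fun t _ => by push_cast; ring)
    have hP : ∏ t ∈ range m, (c + 1 + t) ≠ 0 := prod_ne_zero_iff.mpr fun t _ => hc' t
    have hc0 : c ≠ 0 := by simpa using hc 0
    rw [Function.iterate_succ_apply', fwdDiff, ih hc, ih hc', hprod, hprod (m + 1),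
      prod_range_succ]
    field_simp [hc' m]
    push_cast [Nat.factorial_succ]
    ring

lemma sum_alternating_choose_eval_div {q : K[X]} {m : ℕ} (hq : q.degree ≤ m) {c : K}
    (hc : ∀ t : ℕ, c + t ≠ 0) :
    ∑ j ∈ range (m + 1), (-1) ^ j * m.choose j * (q.eval (c + j) / (c + j)) =
      q.eval 0 * m ! / ∏ t ∈ range (m + 1), (c + t) := by
  have hdivX : (divX q).degree < m := by
    rcases eq_or_ne q 0 with rfl | hq0
    · simp
    · exact (degree_divX_lt hq0).trans_le hq
  have hsplit : ∀ j : ℕ, q.eval (c + j) / (c + j) = q.eval 0 * (c + j)⁻¹ + (divX q).eval (c + j) :=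
    fun j => by
      conv_lhs => rw [← divX_mul_X_add q]
      rw [coeff_zero_eq_eval_zero]
      simp only [eval_add, eval_mul, eval_X, eval_C]
      field_simp [hc j]
      ring
  simp_rw [hsplit, mul_add, sum_add_distrib, sum_alternating_choose_eval_eq_zero hdivX, add_zero]
  have hinv := sum_alternating_choose_eq_fwdDiff_iter (fun x : K => x⁻¹) m c
  rw [fwdDiff_iter_inv m hc] at hinv
  calc ∑ j ∈ range (m + 1), (-1) ^ j * m.choose j * (q.eval 0 * (c + j)⁻¹)
      = q.eval 0 * ∑ j ∈ range (m + 1), (-1) ^ j * m.choose j * (c + j)⁻¹ := by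
        rw [mul_sum]; exact sum_congr rfl fun j _ => by ring
    _ = _ := by
        rw [hinv, mul_div_assoc, ← mul_assoc ((-1) ^ m), ← pow_add, Even.neg_one_pow ⟨m, rfl⟩,
          one_mul, ← mul_div_assoc]

end FiniteDifferences

lemma sum_alternating_choose_mul_choose_div (m b c : ℕ) (hc : 0 < c) :
    ∑ j ∈ range (m + 1), (-1) ^ j * m.choose j * (((c + b + j).choose m : ℝ) / (c + j)) =
      b.descFactorial m / ∏ t ∈ range (m + 1), ((c : ℝ) + t) := by
  set q : ℝ[X] := C (m ! : ℝ)⁻¹ * (descPochhammer ℝ m).comp (X + C (b : ℝ))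
  have hq_eval : ∀ x : ℕ, q.eval (x : ℝ) = (m ! : ℝ)⁻¹ * (x + b).descFactorial m := fun x => by
    simp [q, ← descPochhammer_eval_eq_descFactorial]
  have hq_deg : q.degree ≤ m := degree_le_of_natDegree_le <|
    (natDegree_C_mul_le _ _).trans <| natDegree_comp_le.trans <| by
      rw [descPochhammer_natDegree, natDegree_X_add_C, mul_one]
  have hc' : ∀ t : ℕ, (c : ℝ) + t ≠ 0 := fun t => by positivity
  convert sum_alternating_choose_eval_div hq_deg hc' using 1
  · refine sum_congr rfl fun j _ => ?_
    rw [← Nat.cast_add, hq_eval, descFactorial_eq_factorial_mul_choose]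
    push_cast
    field_simp
    ring_nf
  · rw [← Nat.cast_zero, hq_eval, zero_add]
    field_simp

lemma integral_sum_mul_pow_mul_sum_mul_pow {ι κ : Type*} (s : Finset ι) (t : Finset κ)
    (a : ι → ℝ) (b : κ → ℝ) (d : ι → ℕ) (e : κ → ℕ) :
    ∫ x in (0 : ℝ)..1, (∑ i ∈ s, a i * x ^ d i) * ∑ j ∈ t, b j * x ^ e j =
      ∑ i ∈ s, ∑ j ∈ t, a i * b j / (d i + e j + 1 : ℕ) := by
  have hterm : ∀ i j, ∫ x in (0 : ℝ)..1, a i * b j * x ^ (d i + e j) =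
      a i * b j / (d i + e j + 1 : ℕ) := fun i j => by
    simp [integral_pow, div_eq_mul_inv]
  simp_rw [sum_mul_sum, ← hterm]
  rw [intervalIntegral.integral_finsetSum fun i _ => ?_]
  · refine sum_congr rfl fun i _ => ?_
    rw [intervalIntegral.integral_finsetSum fun j _ => ?_]
    · exact sum_congr rfl fun j _ => by congr 1; ext x; ring
    · exact Continuous.intervalIntegrable (by fun_prop) _ _
  · exact Continuous.intervalIntegrable (by fun_prop) _ _

lemma choose_mul_factorial_div_prod (N m : ℕ) (hN : 0 < N) :
    ((N + m).choose m : ℝ) * m ! / ∏ t ∈ range (m + 1), ((N : ℝ) + t) = 1 / N := by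
  have hasc : ((N + m).choose m : ℝ) * m ! = (N + 1).ascFactorial m := by
    rw [← add_descFactorial_eq_ascFactorial, descFactorial_eq_factorial_mul_choose]
    push_cast; ring
  have hprod : ∏ t ∈ range (m + 1), ((N : ℝ) + t) = N * (N + 1).ascFactorial m := by
    rw [prod_range_succ', ascFactorial_eq_prod_range]
    push_cast
    rw [add_zero, mul_comm]
    exact congrArg _ (prod_congr rfl fun t _ => by ring)
  have : ((N + 1).ascFactorial m : ℝ) ≠ 0 := by positivity
  rw [hasc, hprod]
  field_simp

noncomputable def alpCoeff (k m j : ℕ) : ℝ :=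
  (-1) ^ j * m.choose j * (2 * k + 1 + m + j).choose m

lemma eval_ALP_add (k m : ℕ) (x : ℝ) :
    (ALP (k + m) k).eval x = ∑ j ∈ range (m + 1), alpCoeff k m j * x ^ (k + j) := by
  rw [ALP, eval_finsetSum, Nat.add_sub_cancel_left]
  refine sum_congr rfl fun j _ => ?_
  rw [show k + m + k + 1 + j = 2 * k + 1 + m + j by ring]
  simp [alpCoeff]

lemma sum_alpCoeff_div (k m i : ℕ) (hi : i ≤ m) :
    ∑ j ∈ range (m + 1), alpCoeff k m j / ((k + i + (k + j) + 1 : ℕ) : ℝ) =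
      (m - i).descFactorial m / ∏ t ∈ range (m + 1), (((2 * k + 1 + i : ℕ) : ℝ) + t) := by
  rw [← sum_alternating_choose_mul_choose_div m (m - i) (2 * k + 1 + i) (by omega)]
  refine sum_congr rfl fun j _ => ?_
  rw [alpCoeff, show 2 * k + 1 + i + (m - i) + j = 2 * k + 1 + m + j by omega,
    show k + i + (k + j) + 1 = 2 * k + 1 + i + j by ring, mul_div_assoc]
  push_cast
  rfl

/-- Normalization of the alternative Legendre polynomials. -/
theorem ALP_norm (n k : ℕ) (hk : k ≤ n) :
    ∫ x in (0:ℝ)..1, (ALP n k).eval x ^ 2 = 1 / (2 * (k : ℝ) + 1) := by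
  obtain ⟨m, rfl⟩ := Nat.exists_eq_add_of_le hk
  calc ∫ x in (0:ℝ)..1, (ALP (k + m) k).eval x ^ 2
      = ∑ i ∈ range (m + 1), ∑ j ∈ range (m + 1),
          alpCoeff k m i * alpCoeff k m j / ((k + i + (k + j) + 1 : ℕ) : ℝ) := by
        simp_rw [sq, eval_ALP_add, integral_sum_mul_pow_mul_sum_mul_pow]
    _ = ∑ i ∈ range (m + 1), alpCoeff k m i *
          ((m - i).descFactorial m / ∏ t ∈ range (m + 1), (((2 * k + 1 + i : ℕ) : ℝ) + t)) :=
        sum_congr rfl fun i hi => by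
          simp_rw [mul_div_assoc, ← mul_sum, sum_alpCoeff_div k m i (mem_range_succ_iff.mp hi)]
    _ = alpCoeff k m 0 * (m ! / ∏ t ∈ range (m + 1), (((2 * k + 1 : ℕ) : ℝ) + t)) := by
        rw [sum_eq_single 0 (fun i hi hi0 => by
          rw [descFactorial_of_lt (by have := mem_range.mp hi; omega)]; simp) (by simp),
          Nat.sub_zero, descFactorial_self, add_zero]
    _ = 1 / (2 * (k : ℝ) + 1) := by
        simp only [alpCoeff, pow_zero, choose_zero_right, Nat.cast_one, one_mul, add_zero]
        rw [← mul_div_assoc, choose_mul_factorial_div_prod _ _ (by omega)]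
        push_cast
        rfl
end

section
/- For natural numbers n and k with k ≤ n, the following Rodrigues-type identity holds as an identity of real polynomials: (n−k)! · x^{k+1} · 𝒫_{n,k}(x) = d^{n−k}/dx^{n−k} [ x^{n+k+1} (1−x)^{n−k} ]. -/
open Polynomial

/-! Expanding `(1 - x)^m` binomially and differentiating `x^N (1 - x)^m` term by term `m` times
gives `m! x^(N - m) ∑ⱼ (-1)^j C(m,j) C(N+j,m) x^j`; for `N = n + k + 1`, `m = n - k` this is
`m! x^(2k+1) ∑ⱼ … = m! x^(k+1) 𝒫_{n,k}`. -/

open Finset Nat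

namespace Polynomial

variable {R : Type*} [CommRing R]

theorem one_sub_X_pow_eq_sum (m : ℕ) :
    (1 - X : R[X]) ^ m = ∑ j ∈ range (m + 1), C ((-1) ^ j * (m.choose j : R)) * X ^ j := by
  rw [sub_eq_neg_add, add_pow]
  refine sum_congr rfl fun j _ => ?_
  rw [neg_pow, one_pow, mul_one, C_mul, C_pow, C_neg, C_1, ← C_eq_natCast]
  ring

theorem iterate_derivative_X_pow_eq_factorial_mul_choose (a m : ℕ) :
    derivative^[m] (X ^ a : R[X]) = C (m ! * a.choose m : R) * X ^ (a - m) := by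
  rw [iterate_derivative_X_pow_eq_C_mul, descFactorial_eq_factorial_mul_choose, cast_mul]

theorem iterate_derivative_X_pow_mul_one_sub_X_pow {N m : ℕ} (h : m ≤ N) :
    derivative^[m] (X ^ N * (1 - X : R[X]) ^ m) =
      C (m ! : R) * X ^ (N - m) *
        ∑ j ∈ range (m + 1), C ((-1) ^ j * (m.choose j : R) * ((N + j).choose m : R)) * X ^ j := by
  rw [one_sub_X_pow_eq_sum, mul_sum, iterate_derivative_sum, mul_sum]
  refine sum_congr rfl fun j _ => ?_
  rw [mul_left_comm, ← pow_add, iterate_derivative_C_mul,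
    iterate_derivative_X_pow_eq_factorial_mul_choose, show N + j - m = N - m + j by omega,
    pow_add]
  simp only [C_mul]
  ring

end Polynomial

theorem ALP_eq_X_pow_mul_sum (n k : ℕ) :
    ALP n k = X ^ k * ∑ j ∈ range (n - k + 1),
      C ((-1) ^ j * ((n - k).choose j : ℝ) * ((n + k + 1 + j).choose (n - k) : ℝ)) * X ^ j := by
  rw [ALP, mul_sum]
  refine sum_congr rfl fun j _ => ?_
  rw [pow_add]
  ring

/-- Rodrigues-type representation of the alternative Legendre polynomials. -/
theorem ALP_rodrigues (n k : ℕ) (hk : k ≤ n) :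
    Polynomial.C ((n - k).factorial : ℝ) * Polynomial.X ^ (k + 1) * ALP n k =
      Polynomial.derivative^[n - k]
        (Polynomial.X ^ (n + k + 1) * (1 - Polynomial.X) ^ (n - k)) := by
  rw [iterate_derivative_X_pow_mul_one_sub_X_pow (by omega), ALP_eq_X_pow_mul_sum,
    show n + k + 1 - (n - k) = k + 1 + k by omega, pow_add]
  ring
end

section
/- For natural numbers n and k with k ≤ n, the alternative Legendre polynomial satisfies ∫₀¹ 𝒫_{n,k}(x) dx = 1/(n+1). -/
/-!
Integrating termwise and writing `m = n - k`, the integral is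
`∑ j ≤ m, (-1)^j C(m,j) Q(j) / (k+1+j)`, where `Q(x) = C(x+n+k+1, m)` is a polynomial of
degree `m`.
Dividing, `Q = Q(-k-1) + (X+k+1) R` with `deg R < m`; the `R`-part is an `m`-th finite difference
of a polynomial of degree `< m` and vanishes. What is left is `Q(-k-1) = C(n, m)` times the partial
fraction sum `∑ j ≤ m, (-1)^j C(m,j) / (k+1+j) = m! k! / (n+1)!`, and the product is `1/(n+1)`.
-/

open Polynomial

open Finset

theorem sum_range_neg_one_pow_mul_choose_mul_eval_eq_zero {R : Type*} [CommRing R] {m : ℕ}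
    {P : R[X]} (hP : P.degree < m) :
    ∑ j ∈ range (m + 1), (-1 : R) ^ j * m.choose j * P.eval (j : R) = 0 := by
  rcases eq_or_ne P 0 with rfl | hP0
  · simp
  have hΔ := congr_fun (fwdDiff_iter_eq_zero_of_degree_lt
    ((natDegree_lt_iff_degree_lt hP0).mpr hP)) 0
  rw [fwdDiff_iter_eq_sum_shift, Pi.zero_apply] at hΔ
  calc _ = (-1) ^ m * ∑ j ∈ range (m + 1),
        ((-1 : ℤ) ^ (m - j) * m.choose j) • P.eval (0 + j • 1) := by
        rw [mul_sum]
        refine sum_congr rfl fun j hj => ?_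
        obtain ⟨d, rfl⟩ := Nat.exists_eq_add_of_le (Nat.lt_succ_iff.mp (mem_range.mp hj))
        simp only [Nat.add_sub_cancel_left, zsmul_eq_mul, nsmul_eq_mul, mul_one, zero_add]
        push_cast
        have hsq : ((-1 : R) ^ d) * (-1) ^ d = 1 := by rw [← mul_pow]; simp
        linear_combination (-(-1) ^ j * (j + d).choose j * P.eval (j : R)) * hsq
    _ = 0 := by rw [hΔ, mul_zero]

theorem exists_eq_C_eval_add_mul_of_natDegree_le {K : Type*} [Field K] {m : ℕ} {Q : K[X]}
    (hQ : Q.natDegree ≤ m) (c : K) :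
    ∃ R : K[X], R.degree < m ∧ Q = C (Q.eval (-c)) + (X + C c) * R := by
  set p := Q - C (Q.eval (-c))
  have hp : (X - C (-c)) * (p /ₘ (X - C (-c))) = p :=
    mul_divByMonic_eq_iff_isRoot.mpr (by simp [p])
  refine ⟨p /ₘ (X - C (-c)), ?_, ?_⟩
  · rcases eq_or_ne p 0 with hp0 | hp0
    · simp [hp0]
    calc _ < p.degree := degree_divByMonic_lt p _ hp0 (by simp)
      _ ≤ m := (degree_sub_le _ _).trans (max_le (degree_le_of_natDegree_le hQ)
          (degree_C_le.trans (by simp)))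
  · rw [← sub_neg_eq_add X, ← C_neg, hp, add_sub_cancel]

theorem sum_range_neg_one_pow_mul_choose_mul_eval_div {K : Type*} [Field K] {m : ℕ} {Q : K[X]}
    (hQ : Q.natDegree ≤ m) {c : K} (hc : ∀ j ≤ m, c + j ≠ 0) :
    ∑ j ∈ range (m + 1), (-1 : K) ^ j * m.choose j * Q.eval (j : K) / (c + j) =
      Q.eval (-c) * ∑ j ∈ range (m + 1), (-1 : K) ^ j * m.choose j / (c + j) := by
  obtain ⟨R, hR, hQR⟩ := exists_eq_C_eval_add_mul_of_natDegree_le hQ c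
  have hsplit : ∀ j ∈ range (m + 1), (-1 : K) ^ j * m.choose j * Q.eval (j : K) / (c + j) =
      Q.eval (-c) * ((-1 : K) ^ j * m.choose j / (c + j)) +
        (-1) ^ j * m.choose j * R.eval (j : K) := by
    intro j hj
    have hcj := hc j (Nat.lt_succ_iff.mp (mem_range.mp hj))
    conv_lhs => rw [hQR]
    simp only [eval_add, eval_mul, eval_C, eval_X]
    field_simp
    ring
  rw [sum_congr rfl hsplit, sum_add_distrib,
    sum_range_neg_one_pow_mul_choose_mul_eval_eq_zero hR, add_zero, mul_sum]

theorem sum_range_succ_neg_one_pow_mul_choose_mul {R : Type*} [CommRing R] (f : ℕ → R)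
    (m : ℕ) :
    ∑ j ∈ range (m + 2), (-1 : R) ^ j * (m + 1).choose j * f j =
      ∑ j ∈ range (m + 1), (-1 : R) ^ j * m.choose j * (f j - f (j + 1)) := by
  have := sum_choose_succ_mul (fun i _ => (-1 : R) ^ i * f i) m
  simp only [mul_left_comm _ ((-1 : R) ^ _), ← mul_assoc, pow_succ] at this
  rw [this, ← sum_add_distrib]
  exact sum_congr rfl fun j _ => by ring

theorem sum_range_neg_one_pow_mul_choose_div_eq_factorial_div_ascPochhammer {K : Type*} [Field K]
    [LinearOrder K] [IsStrictOrderedRing K] (m : ℕ) {c : K} (hc : 0 < c) :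
    ∑ j ∈ range (m + 1), (-1 : K) ^ j * m.choose j / (c + j) =
      m.factorial / (ascPochhammer K (m + 1)).eval c := by
  induction m generalizing c with
  | zero => simp
  | succ m ih =>
    simp_rw [div_eq_mul_inv, sum_range_succ_neg_one_pow_mul_choose_mul (fun j => (c + j)⁻¹),
      mul_sub, sum_sub_distrib, ← div_eq_mul_inv]
    have hc1 : 0 < c + 1 := by positivity
    have hshift : ∀ j : ℕ, c + ((j + 1 : ℕ) : K) = (c + 1) + j := fun j => by push_cast; ring
    simp only [hshift]
    rw [ih hc, ih hc1]
    have hleft : (ascPochhammer K (m + 2)).eval c =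
        c * (ascPochhammer K (m + 1)).eval (c + 1) := by
      simp [ascPochhammer_succ_left K (m + 1)]
    have hright : (ascPochhammer K (m + 2)).eval c =
        (ascPochhammer K (m + 1)).eval c * (c + (m + 1)) := by
      rw [ascPochhammer_succ_eval]; push_cast; ring
    have hA := ascPochhammer_pos (m + 1) c hc
    have hA1 := ascPochhammer_pos (m + 1) (c + 1) hc1
    have hA2 := ascPochhammer_pos (m + 2) c hc
    rw [div_sub_div _ _ hA.ne' hA1.ne', div_eq_div_iff (mul_pos hA hA1).ne' hA2.ne']
    push_cast [Nat.factorial_succ]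
    linear_combination (m.factorial : K) *
      ((ascPochhammer K (m + 1)).eval (c + 1) * hright - (ascPochhammer K (m + 1)).eval c * hleft)

theorem choose_add_mul_factorial_div_ascPochhammer_eval {K : Type*} [Field K] [CharZero K]
    (k m : ℕ) :
    ((k + m).choose m : K) * (m.factorial / (ascPochhammer K (m + 1)).eval ((k : K) + 1)) =
      1 / ((k + m : ℕ) + 1) := by
  have hfac := factorial_mul_ascPochhammer K k (m + 1)
  have hk : (k.factorial : K) ≠ 0 := Nat.cast_ne_zero.mpr k.factorial_ne_zero
  have hA : (ascPochhammer K (m + 1)).eval ((k : K) + 1) ≠ 0 :=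
    right_ne_zero_of_mul (hfac ▸ Nat.cast_ne_zero.mpr (Nat.factorial_ne_zero _))
  rw [← add_assoc, Nat.factorial_succ, ← Nat.add_choose_mul_factorial_mul_factorial k m] at hfac
  rw [mul_div, div_eq_div_iff hA (Nat.cast_add_one_ne_zero _)]
  refine mul_left_cancel₀ hk ?_
  push_cast at hfac ⊢
  linear_combination -hfac

theorem exists_natDegree_le_forall_eval_eq_choose {K : Type*} [Field K] [CharZero K]
    (a m : ℕ) :
    ∃ Q : K[X], Q.natDegree ≤ m ∧
      ∀ (x : K) (t : ℕ), x + a = t → Q.eval x = t.choose m := by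
  refine ⟨C (m.factorial : K)⁻¹ * (descPochhammer K m).comp (X + C (a : K)), ?_,
    fun x t hxt => ?_⟩
  · refine (natDegree_C_mul_le _ _).trans ?_
    rw [natDegree_comp, natDegree_X_add_C, mul_one, descPochhammer_natDegree]
  · simp [hxt, Nat.cast_choose_eq_descPochhammer_div, div_eq_inv_mul]

theorem integral_eval_sum_C_mul_X_pow {ι : Type*} (s : Finset ι) (a : ι → ℝ)
    (e : ι → ℕ) :
    ∫ x in (0 : ℝ)..1, (∑ i ∈ s, C (a i) * X ^ e i).eval x =
      ∑ i ∈ s, a i / (e i + 1) := by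
  simp only [eval_finsetSum, eval_mul, eval_C, eval_pow, eval_X]
  rw [intervalIntegral.integral_finsetSum (f := fun i x => a i * x ^ e i) fun i _ =>
    (continuous_const.mul (continuous_pow _)).intervalIntegrable 0 1]
  refine sum_congr rfl fun i _ => ?_
  rw [intervalIntegral.integral_const_mul, integral_pow]
  simp [div_eq_mul_inv]

/-- The integral of an alternative Legendre polynomial over [0,1] is 1/(n+1). -/
theorem ALP_integral (n k : ℕ) (hk : k ≤ n) :
    ∫ x in (0:ℝ)..1, (ALP n k).eval x = 1 / ((n : ℝ) + 1) := by
  obtain ⟨m, rfl⟩ := Nat.exists_eq_add_of_le hk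
  obtain ⟨Q, hQdeg, hQ⟩ :=
    exists_natDegree_le_forall_eval_eq_choose (K := ℝ) (k + m + k + 1) m
  have hc : (0 : ℝ) < k + 1 := by positivity
  calc ∫ x in (0:ℝ)..1, (ALP (k + m) k).eval x
      = ∑ j ∈ range (m + 1),
          (-1 : ℝ) ^ j * m.choose j * Q.eval (j : ℝ) / ((k + 1 : ℝ) + j) := by
        rw [ALP, integral_eval_sum_C_mul_X_pow, Nat.add_sub_cancel_left]
        refine sum_congr rfl fun j _ => ?_
        rw [hQ j (k + m + k + 1 + j) (by push_cast; ring)]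
        push_cast
        ring_nf
    _ = ((k + m).choose m : ℝ) *
          (m.factorial / (ascPochhammer ℝ (m + 1)).eval ((k : ℝ) + 1)) := by
        rw [sum_range_neg_one_pow_mul_choose_mul_eval_div hQdeg fun j _ => by positivity,
          sum_range_neg_one_pow_mul_choose_div_eq_factorial_div_ascPochhammer m hc,
          hQ _ (k + m) (by push_cast; ring)]
    _ = 1 / ((k + m : ℕ) + 1) := choose_add_mul_factorial_div_ascPochhammer_eval k m
end

section
/- For natural numbers n and k with k ≤ n−1, the alternative Legendre polynomials satisfy the differentiation formula (as an identity of real polynomials): 2(k+1) · x(1−x) · 𝒫'_{n,k}(x) = ( 2k(k+1) − (n² + k² + 2n)·x ) · 𝒫_{n,k}(x) − (n−k)(n+k+2) · x · 𝒫_{n,k+1}(x). -/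
/-!
Compare coefficients. Writing `a_m` for the coefficient of `x^(k+m)` in `𝒫_{n,k}` and `b_m` for that
in `𝒫_{n,k+1}`, Pascal-type binomial identities give two first-order relations,
`(m+1)(2k+2+m) a_{m+1} = -(n-k-m)(n+k+2+m) a_m` and `(2k+2+m) b_m = -m a_m`.
After multiplying the coefficient of `x^(k+m+1)` in the claimed identity by `2k+2+m`, both relations
express everything through `a_m`, and what is left is a polynomial identity in `n`, `k`, `m`.
-/

open Polynomial

theorem Nat.cast_choose_succ_right_mul {R : Type*} [Ring R] (n k : ℕ) :
    (n.choose (k + 1) : R) * (k + 1) = n.choose k * ((n : R) - k) := by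
  rcases le_or_gt k n with hkn | hkn
  · have h := congrArg (Nat.cast (R := R)) (Nat.choose_succ_right_eq n k)
    push_cast [hkn] at h
    exact h
  · simp [Nat.choose_eq_zero_of_lt hkn, Nat.choose_eq_zero_of_lt (hkn.trans k.lt_succ_self)]

theorem Nat.cast_choose_mul_succ {R : Type*} [Ring R] (n k : ℕ) :
    (n.choose k : R) * (n + 1) = (n + 1).choose k * ((n : R) + 1 - k) := by
  rcases le_or_gt k (n + 1) with hkn | hkn
  · have h := congrArg (Nat.cast (R := R)) (Nat.choose_mul_succ_eq n k)
    push_cast [hkn] at h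
    exact h
  · simp [Nat.choose_eq_zero_of_lt hkn, Nat.choose_eq_zero_of_lt (Nat.lt_of_succ_lt hkn)]

theorem Polynomial.coeff_X_mul_derivative {R : Type*} [Semiring R] (p : R[X]) (i : ℕ) :
    (X * derivative p).coeff i = p.coeff i * i := by
  cases i with
  | zero => simp
  | succ i => rw [coeff_X_mul, coeff_derivative, Nat.cast_succ]

theorem coeff_ALP_of_lt {n k i : ℕ} (h : i < k) : (ALP n k).coeff i = 0 := by
  simp only [ALP, finsetSum_coeff, coeff_C_mul, coeff_X_pow]
  exact Finset.sum_eq_zero fun j _ => by rw [if_neg (by omega), mul_zero]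

theorem coeff_ALP_add (n k m : ℕ) :
    (ALP n k).coeff (k + m) =
      (-1 : ℝ) ^ m * (n - k).choose m * (n + k + 1 + m).choose (n - k) := by
  simp only [ALP, finsetSum_coeff, coeff_C_mul, coeff_X_pow, add_right_inj, mul_ite, mul_one,
    mul_zero, Finset.sum_ite_eq, Finset.mem_range]
  split_ifs with hm
  · rfl
  · simp [Nat.choose_eq_zero_of_lt (by omega : n - k < m)]

theorem mul_coeff_ALP_add_one {n k : ℕ} (hk : k ≤ n) (m : ℕ) :
    ((m : ℝ) + 1) * (2 * k + 2 + m) * (ALP n k).coeff (k + m + 1) =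
      -(((n : ℝ) - k - m) * (n + k + 2 + m)) * (ALP n k).coeff (k + m) := by
  rw [show k + m + 1 = k + (m + 1) by ring, coeff_ALP_add, coeff_ALP_add]
  have h1 := Nat.cast_choose_succ_right_mul (R := ℝ) (n - k) m
  have h2 := Nat.cast_choose_mul_succ (R := ℝ) (n + k + 1 + m) (n - k)
  push_cast [hk] at h1 h2 ⊢
  linear_combination
    (-(-1 : ℝ) ^ m * ((n + k + 1 + m + 1).choose (n - k) : ℝ) * (2 * k + 2 + m)) * h1
      + ((-1 : ℝ) ^ m * ((n - k).choose m : ℝ) * ((n : ℝ) - k - m)) * h2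

theorem mul_coeff_ALP_succ {n k : ℕ} (hkn : k + 1 ≤ n) (m : ℕ) :
    (2 * (k : ℝ) + 2 + m) * (ALP n (k + 1)).coeff (k + m) = -m * (ALP n k).coeff (k + m) := by
  cases m with
  | zero => simp [coeff_ALP_of_lt k.lt_succ_self]
  | succ j =>
    rw [coeff_ALP_add n k (j + 1), show k + (j + 1) = k + 1 + j by ring, coeff_ALP_add,
      show n - k = n - (k + 1) + 1 by omega,
      show n + k + 1 + (j + 1) = n + (k + 1) + 1 + j by ring]
    have h1 := congrArg (Nat.cast (R := ℝ)) (Nat.add_one_mul_choose_eq (n - (k + 1)) j)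
    have h2 := Nat.cast_choose_succ_right_mul (R := ℝ) (n + (k + 1) + 1 + j) (n - (k + 1))
    push_cast [hkn] at h1 h2 ⊢
    linear_combination
      ((-1 : ℝ) ^ j * ((n + (k + 1) + 1 + j).choose (n - (k + 1) + 1) : ℝ)) * h1
        - ((-1 : ℝ) ^ j * ((n - (k + 1)).choose j : ℝ)) * h2

/-- First differentiation formula for the alternative Legendre polynomials. -/
theorem ALP_deriv_up (n k : ℕ) (hkn : k + 1 ≤ n) :
    Polynomial.C (2 * ((k : ℝ) + 1)) * (Polynomial.X * (1 - Polynomial.X)) *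
        Polynomial.derivative (ALP n k) =
      (Polynomial.C (2 * (k : ℝ) * (k + 1)) -
          Polynomial.C ((n : ℝ) ^ 2 + (k : ℝ) ^ 2 + 2 * n) * Polynomial.X) * ALP n k -
      Polynomial.C (((n : ℝ) - k) * ((n : ℝ) + k + 2)) * Polynomial.X * ALP n (k + 1) := by
  ext i
  simp only [mul_assoc, mul_sub, sub_mul, mul_one, coeff_sub, coeff_C_mul, coeff_X_mul_derivative]
  rcases i with _ | i
  · simpa using (Nat.eq_zero_or_pos k).imp_right fun hk => Or.inr (coeff_ALP_of_lt hk)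
  simp only [coeff_X_mul, coeff_X_mul_derivative]
  rcases lt_or_ge i k with hik | hki
  · rw [coeff_ALP_of_lt hik, coeff_ALP_of_lt (hik.trans k.lt_succ_self)]
    rcases (Nat.succ_le_of_lt hik).eq_or_lt with rfl | hik
    · push_cast; ring
    · simp [coeff_ALP_of_lt hik]
  obtain ⟨m, rfl⟩ := Nat.exists_eq_add_of_le hki
  refine mul_left_cancel₀ (by positivity : (2 * (k : ℝ) + 2 + m) ≠ 0) ?_
  push_cast
  linear_combination (2 * ((k : ℝ) + 1)) * mul_coeff_ALP_add_one (Nat.le_of_succ_le hkn) m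
    + (((n : ℝ) - k) * (n + k + 2)) * mul_coeff_ALP_succ hkn m
end

section
/- For natural numbers n and k with k ≤ n, the polynomial ζ(x) = x · 𝒫_{n,k}(x) satisfies the differential equation x²(1−x)·ζ''(x) − x²·ζ'(x) + ((n+1)²·x − k(k+1))·ζ(x) = 0, as an identity of real polynomials. -/
open Polynomial

theorem Finset.sum_range_succ_add_eq_zero_of_shift {M : Type*} [AddCommMonoid M]
    (f g : ℕ → M) (N : ℕ)
    (h₀ : f 0 = 0) (hN : g N = 0) (hshift : ∀ j < N, f (j + 1) + g j = 0) :
    ∑ j ∈ range (N + 1), (f j + g j) = 0 := by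
  rw [sum_add_distrib, sum_range_succ', sum_range_succ, h₀, hN, add_zero, add_zero,
    ← sum_add_distrib]
  exact sum_eq_zero fun j hj => hshift j (mem_range.mp hj)

namespace ALP

noncomputable def odeOperator (n k : ℕ) : ℝ[X] →ₗ[ℝ] ℝ[X] :=
  LinearMap.mulLeft ℝ (X ^ 2 * (1 - X)) ∘ₗ derivative ∘ₗ derivative -
    LinearMap.mulLeft ℝ (X ^ 2) ∘ₗ derivative +
    LinearMap.mulLeft ℝ (C (((n : ℝ) + 1) ^ 2) * X - C ((k : ℝ) * (k + 1)))

theorem odeOperator_apply (n k : ℕ) (ζ : ℝ[X]) :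
    odeOperator n k ζ = X ^ 2 * (1 - X) * derivative (derivative ζ) - X ^ 2 * derivative ζ +
      (C (((n : ℝ) + 1) ^ 2) * X - C ((k : ℝ) * (k + 1))) * ζ := rfl

theorem odeOperator_X_pow (n k m : ℕ) :
    odeOperator n k (X ^ m) = ((m : ℝ) * (m - 1) - k * (k + 1)) • X ^ m +
      (((n : ℝ) + 1) ^ 2 - m ^ 2) • X ^ (m + 1) := by
  rw [odeOperator_apply]
  rcases m with _ | _ | m <;>
    simp only [pow_zero, zero_add, pow_one, derivative_one, derivative_zero, derivative_X,
      derivative_X_pow_succ, derivative_C_mul] <;>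
    simp only [smul_eq_C_mul, map_sub, map_mul, map_add, map_pow, map_natCast, map_one, map_zero,
      Nat.cast_add, Nat.cast_one, Nat.cast_zero] <;>
    ring

noncomputable def coeff (n k j : ℕ) : ℝ :=
  (-1) ^ j * (n - k).choose j * (n + k + 1 + j).choose (n - k)

theorem X_mul_eq_sum_smul (n k : ℕ) :
    X * ALP n k = ∑ j ∈ Finset.range (n - k + 1), coeff n k j • X ^ (k + j + 1) := by
  simp only [ALP, Finset.mul_sum, smul_eq_C_mul, coeff]
  exact Finset.sum_congr rfl fun j _ => by ring

theorem coeff_succ_mul_add_coeff_mul_eq_zero {n k j : ℕ} (hj : j < n - k) :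
    coeff n k (j + 1) * (((k + j + 2 : ℕ) : ℝ) * ((k + j + 2 : ℕ) - 1) - k * (k + 1)) +
      coeff n k j * (((n : ℝ) + 1) ^ 2 - ((k + j + 1 : ℕ) : ℝ) ^ 2) = 0 := by
  have hkn : k ≤ n := by omega
  have hchoose : (n - k).choose (j + 1) * (j + 1) *
        ((n + k + 1 + (j + 1)).choose (n - k) * (2 * k + j + 2)) =
      (n - k).choose j * (n - k - j) * ((n + k + 1 + j).choose (n - k) * (n + k + 1 + j + 1)) := by
    rw [Nat.choose_succ_right_eq, show n + k + 1 + (j + 1) = n + k + 1 + j + 1 by omega,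
      show 2 * k + j + 2 = n + k + 1 + j + 1 - (n - k) by omega, ← Nat.choose_mul_succ_eq]
  have hreal := congrArg (Nat.cast : ℕ → ℝ) hchoose
  push_cast [Nat.cast_sub hj.le, Nat.cast_sub hkn] at hreal
  simp only [coeff, pow_succ]
  push_cast
  linear_combination (-(-1 : ℝ) ^ j) * hreal

end ALP

/-- x·𝒫_{n,k}(x) solves the differential equation
x²(1−x)ζ'' − x²ζ' + ((n+1)²x − k(k+1))ζ = 0. -/
theorem ALP_ode (n k : ℕ) (hk : k ≤ n) :
    Polynomial.X ^ 2 * (1 - Polynomial.X) *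
        Polynomial.derivative (Polynomial.derivative (Polynomial.X * ALP n k)) -
      Polynomial.X ^ 2 * Polynomial.derivative (Polynomial.X * ALP n k) +
      (Polynomial.C (((n : ℝ) + 1) ^ 2) * Polynomial.X -
          Polynomial.C ((k : ℝ) * (k + 1))) * (Polynomial.X * ALP n k) = 0 := by
  rw [← ALP.odeOperator_apply, ALP.X_mul_eq_sum_smul, map_sum]
  simp only [map_smul, ALP.odeOperator_X_pow, smul_add, smul_smul]
  apply Finset.sum_range_succ_add_eq_zero_of_shift
  · simp [mul_comm]
  · rw [show k + (n - k) + 1 = n + 1 by omega]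
    simp
  · intro j hj
    rw [show k + (j + 1) + 1 = k + j + 2 by omega, ← add_smul,
      ALP.coeff_succ_mul_add_coeff_mul_eq_zero hj, zero_smul]
end

section
/- For natural numbers n, k, l with n ≤ k, n ≤ l and k ≠ l, the auxiliary polynomials satisfy the orthogonality relation ∫₀¹ P_{n,k}(x) · P_{n,l}(x) dx = 0. -/
/-!
By Rodrigues' formula, `x^n P_{n,l}(x)` is a nonzero multiple of the `(l-n)`-th derivative of
`f(x) = x^{l+n} (x-1)^{l-n}`, and all lower derivatives of `f` vanish at `0` and `1`. Hence
integrating by parts `l-n` times gives `∫₀¹ x^n q(x) P_{n,l}(x) dx = 0` for every polynomial `q`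
of degree `< l-n`. For `k < l` the polynomial `P_{n,k}` has this form, with `q` the Jacobi factor
of degree `≤ k-n`.
-/

open Polynomial

/-- The auxiliary polynomial P_{n,k}(x) = x^n * Jacobi P^{(2n,0)}_{k-n}(1-2x). -/
noncomputable def AuxP (n k : ℕ) : Polynomial ℝ :=
  Polynomial.X ^ n *
    ∑ s ∈ Finset.range (k - n + 1),
      Polynomial.C (((k + n).choose (k - n - s) : ℝ) * ((k - n).choose s : ℝ)) *
        (-Polynomial.X) ^ s * (1 - Polynomial.X) ^ (k - n - s)

open Finset
open scoped Nat

theorem Nat.choose_mul_descFactorial_mul_descFactorial {N m j : ℕ} (hj : j ≤ m) :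
    m.choose j * (N.descFactorial (m - j) * m.descFactorial j)
      = m ! * (N.choose (m - j) * m.choose j) := by
  rw [Nat.descFactorial_eq_factorial_mul_choose, ← Nat.factorial_mul_descFactorial hj]
  ring

namespace Polynomial

theorem iterate_derivative_X_pow_mul_X_sub_C_pow {R : Type*} [CommRing R] {N m : ℕ} (h : m ≤ N)
    (c : R) :
    derivative^[m] (X ^ N * (X - C c) ^ m) = ∑ j ∈ range (m + 1),
      C ((m ! * (N.choose (m - j) * m.choose j) : ℕ) : R) * X ^ (N - m + j) *
        (X - C c) ^ (m - j) := by
  rw [iterate_derivative_mul]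
  refine sum_congr rfl fun j hj => ?_
  have hj := Nat.lt_succ_iff.mp (mem_range.mp hj)
  rw [iterate_derivative_X_pow_eq_smul, iterate_derivative_X_sub_pow,
    ← Nat.choose_mul_descFactorial_mul_descFactorial hj, show N - (m - j) = N - m + j by omega]
  simp only [nsmul_eq_mul, smul_eq_C_mul, Nat.cast_mul, map_mul, map_natCast]
  ring

theorem isRoot_iterate_derivative_of_pow_dvd {R : Type*} [CommRing R] {p : R[X]} {a : R}
    {N i : ℕ} (hp : (X - C a) ^ N ∣ p) (hi : i < N) : (derivative^[i] p).IsRoot a :=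
  dvd_iff_isRoot.mp <| (dvd_pow_self _ (Nat.sub_ne_zero_of_lt hi)).trans
    (pow_sub_dvd_iterate_derivative_of_pow_dvd i hp)

theorem integral_eval_mul_eval_derivative (p q : ℝ[X]) (a b : ℝ) :
    ∫ x in a..b, p.eval x * (derivative q).eval x
      = p.eval b * q.eval b - p.eval a * q.eval a -
          ∫ x in a..b, (derivative p).eval x * q.eval x :=
  intervalIntegral.integral_mul_deriv_eq_deriv_mul (fun x _ => p.hasDerivAt x)
    (fun x _ => q.hasDerivAt x) ((derivative p).continuous.intervalIntegrable a b)
    ((derivative q).continuous.intervalIntegrable a b)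

theorem integral_eval_mul_eval_iterate_derivative {a b : ℝ} {f : ℝ[X]} {m : ℕ}
    (hf : ∀ i < m, (derivative^[i] f).IsRoot a ∧ (derivative^[i] f).IsRoot b) (p : ℝ[X]) :
    ∫ x in a..b, p.eval x * (derivative^[m] f).eval x
      = (-1) ^ m * ∫ x in a..b, (derivative^[m] p).eval x * f.eval x := by
  induction m generalizing p with
  | zero => simp
  | succ m ih =>
    obtain ⟨hfa, hfb⟩ := hf m m.lt_succ_self
    rw [Function.iterate_succ_apply', integral_eval_mul_eval_derivative, hfa.eq_zero, hfb.eq_zero,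
      ih (fun i hi => hf i (hi.trans m.lt_succ_self)), ← Function.iterate_succ_apply]
    ring

end Polynomial

/-- The Jacobi factor `P^{(2n,0)}_{k-n}(1-2x)` of `AuxP n k`. -/
noncomputable def AuxQ (n k : ℕ) : ℝ[X] :=
  ∑ s ∈ range (k - n + 1),
    C (((k + n).choose (k - n - s) : ℝ) * ((k - n).choose s : ℝ)) * (-X) ^ s *
      (1 - X) ^ (k - n - s)

theorem AuxP_eq_X_pow_mul_AuxQ (n k : ℕ) : AuxP n k = X ^ n * AuxQ n k := rfl

theorem natDegree_AuxQ_le (n k : ℕ) : (AuxQ n k).natDegree ≤ k - n := by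
  refine natDegree_sum_le_of_forall_le _ _ fun s hs => ?_
  have hs := mem_range.mp hs
  compute_degree
  omega

theorem AuxQ_eq_sum (n k : ℕ) : AuxQ n k = C ((-1) ^ (k - n)) * ∑ s ∈ range (k - n + 1),
    C (((k + n).choose (k - n - s) : ℝ) * ((k - n).choose s : ℝ)) * X ^ s *
      (X - C 1) ^ (k - n - s) := by
  rw [AuxQ, mul_sum]
  refine sum_congr rfl fun s hs => ?_
  have hs := Nat.lt_succ_iff.mp (mem_range.mp hs)
  have hsign : C ((-1 : ℝ) ^ (k - n)) = (-1) ^ s * (-1) ^ (k - n - s) := by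
    rw [← pow_add, Nat.add_sub_cancel' hs, map_pow, map_neg, map_one]
  rw [neg_pow, show (1 - X : ℝ[X]) = -1 * (X - C 1) by simp, mul_pow, hsign]
  ring

theorem AuxP_rodrigues {n k : ℕ} (hk : n ≤ k) :
    derivative^[k - n] (X ^ (k + n) * (X - C 1) ^ (k - n))
      = C ((-1) ^ (k - n) * (k - n)! : ℝ) * (X ^ n * AuxP n k) := by
  have hsign : ((-1 : ℝ[X]) ^ (k - n)) * (-1) ^ (k - n) = 1 := by
    rw [← mul_pow]; norm_num
  rw [iterate_derivative_X_pow_mul_X_sub_C_pow (by omega), AuxP_eq_X_pow_mul_AuxQ, AuxQ_eq_sum,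
    mul_sum, mul_sum, mul_sum, mul_sum]
  refine sum_congr rfl fun j _ => ?_
  rw [show k + n - (k - n) + j = n + n + j by omega]
  simp only [map_mul, map_pow, map_neg, map_one, map_natCast, Nat.cast_mul]
  linear_combination (-((k - n)! * ((k + n).choose (k - n - j) * (k - n).choose j) : ℝ[X]) *
    X ^ (n + n + j) * (X - 1) ^ (k - n - j)) * hsign

theorem integral_X_pow_mul_mul_AuxP_eq_zero {n l : ℕ} (hl : n ≤ l) {q : ℝ[X]}
    (hq : q.natDegree < l - n) :
    ∫ x in (0:ℝ)..1, (X ^ n * q).eval x * (AuxP n l).eval x = 0 := by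
  set f : ℝ[X] := X ^ (l + n) * (X - C 1) ^ (l - n)
  have hf : ∀ i < l - n, (derivative^[i] f).IsRoot 0 ∧ (derivative^[i] f).IsRoot 1 :=
    fun i hi =>
      ⟨isRoot_iterate_derivative_of_pow_dvd (N := l + n)
          (by rw [map_zero, sub_zero]; exact dvd_mul_right _ _) (by omega),
        isRoot_iterate_derivative_of_pow_dvd (dvd_mul_left _ _) hi⟩
  have hc : ((-1) ^ (l - n) * (l - n)! : ℝ) ≠ 0 := by positivity
  have key : ((-1) ^ (l - n) * (l - n)! : ℝ) *
      ∫ x in (0:ℝ)..1, (X ^ n * q).eval x * (AuxP n l).eval x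
      = ∫ x in (0:ℝ)..1, q.eval x * (derivative^[l - n] f).eval x := by
    rw [AuxP_rodrigues hl, ← intervalIntegral.integral_const_mul]
    congr 1 with x
    simp only [eval_mul, eval_C, eval_pow, eval_X]
    ring
  rw [integral_eval_mul_eval_iterate_derivative hf, iterate_derivative_eq_zero hq] at key
  simpa [hc] using key

/-- Orthogonality of the auxiliary polynomials. -/
theorem AuxP_orthogonal (n k l : ℕ) (hk : n ≤ k) (hl : n ≤ l) (hkl : k ≠ l) :
    ∫ x in (0:ℝ)..1, (AuxP n k).eval x * (AuxP n l).eval x = 0 := by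
  wlog hlt : k < l generalizing k l
  · simp_rw [mul_comm (eval _ (AuxP n k))]
    exact this l k hl hk hkl.symm (by omega)
  rw [AuxP_eq_X_pow_mul_AuxQ n k]
  exact integral_X_pow_mul_mul_AuxP_eq_zero hl ((natDegree_AuxQ_le n k).trans_lt (by omega))
end

section
/- For natural numbers n and k with n ≤ k, the auxiliary polynomial satisfies the normalization ∫₀¹ P_{n,k}(x)² dx = 1/(2k+1). -/
/-!
Write `k = n + m`. Then `P_{n,k} = Xⁿ J` with `J = shiftedJacobi (2n) m`, and Rodrigues' formula
`m! X^{2n} J = D^m Q` for `Q = X^{2n+m} (1 - X)^m` turns `∫₀¹ P_{n,k}²` into `(1/m!) ∫₀¹ J · D^m Q`.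
As `Q` vanishes to order `m` at both endpoints, `m` integrations by parts move every derivative
onto `J`, whose `m`-th derivative is the constant `m! · lc J = (-1)^m (2k)! / (k + n)!` (read off
from the top coefficient of Rodrigues' formula). What is left is the Beta integral
`∫₀¹ Q = m! (k + n)! / (2k + 1)!`, computed by the same integration by parts.
-/

open Polynomial

open Nat Finset

namespace Polynomial

variable {R : Type*}

theorem iterate_derivative_eq_C_of_natDegree_le [Semiring R] {p : R[X]} {m : ℕ}
    (hp : p.natDegree ≤ m) : derivative^[m] p = C (m ! • p.coeff m) := by
  have hdeg : (derivative^[m] p).natDegree ≤ 0 :=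
    (natDegree_iterate_derivative p m).trans (by omega)
  rw [eq_C_of_natDegree_le_zero hdeg, coeff_iterate_derivative, zero_add,
    Nat.descFactorial_self]

variable [CommRing R]

theorem eval_iterate_derivative_eq_zero_of_pow_dvd {p q : R[X]} {x : R} {m j : ℕ}
    (hj : j < m) (hq : q.eval x = 0) (h : q ^ m ∣ p) : (derivative^[j] p).eval x = 0 := by
  obtain ⟨r, hr⟩ := (dvd_pow_self q (Nat.sub_ne_zero_of_lt hj)).trans
    (pow_sub_dvd_iterate_derivative_of_pow_dvd j h)
  rw [hr, eval_mul, hq, zero_mul]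

theorem iterate_derivative_one_sub_X_pow (m i : ℕ) :
    derivative^[i] ((1 - X : R[X]) ^ m)
      = (-1) ^ i * m.descFactorial i * (1 - X : R[X]) ^ (m - i) := by
  rw [← X_pow_comp (p := 1 - X), iterate_derivative_comp_one_sub_X,
    iterate_derivative_X_pow_eq_natCast_mul]
  simp [mul_assoc]

theorem coeff_one_sub_X_pow_self (m : ℕ) : ((1 - X : R[X]) ^ m).coeff m = (-1) ^ m := by
  rw [show (1 - X : R[X]) = C (-1) * (X + C (-1)) by simp; ring, mul_pow, ← C_pow, coeff_C_mul,
    coeff_X_add_C_pow]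
  simp

end Polynomial

namespace intervalIntegral

theorem integral_eval_mul_derivative (a b : ℝ) (p q : ℝ[X]) :
    ∫ x in a..b, (p * derivative q).eval x
      = (p * q).eval b - (p * q).eval a - ∫ x in a..b, (derivative p * q).eval x := by
  simp only [eval_mul]
  exact integral_mul_deriv_eq_deriv_mul (fun x _ ↦ p.hasDerivAt x) (fun x _ ↦ q.hasDerivAt x)
    (p.derivative.continuous.intervalIntegrable a b)
    (q.derivative.continuous.intervalIntegrable a b)

theorem integral_eval_mul_iterate_derivative (a b : ℝ) (p q : ℝ[X]) (m : ℕ)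
    (hboundary : ∀ i j, i + j + 1 = m →
      (derivative^[i] p * derivative^[j] q).eval a = 0 ∧
        (derivative^[i] p * derivative^[j] q).eval b = 0) :
    ∫ x in a..b, (p * derivative^[m] q).eval x
      = (-1) ^ m * ∫ x in a..b, (derivative^[m] p * q).eval x := by
  induction m generalizing q with
  | zero => simp
  | succ m ih =>
    have hq := ih (derivative q) fun i j hij ↦ by
      simpa only [← Function.iterate_succ_apply] using hboundary i (j + 1) (by omega)
    obtain ⟨ha, hb⟩ := hboundary m 0 rfl
    simp only [Function.iterate_zero_apply] at ha hb
    rw [Function.iterate_succ_apply, hq, integral_eval_mul_derivative, ha, hb,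
      ← Function.iterate_succ_apply' derivative]
    ring

end intervalIntegral

open intervalIntegral in
theorem integral_pow_mul_one_sub_pow (b m : ℕ) :
    ∫ x in (0:ℝ)..1, x ^ b * (1 - x) ^ m
      = m ! / ((b + m + 1) * (b + m).descFactorial m) := by
  -- `X ^ b = D^m X^(b+m) / (b+m).descFactorial m`, and the boundary terms die because
  -- `(1 - X)^m` vanishes to order `m` at `1` and `X^(b+m)` to order `≥ m` at `0`.
  have hibp := integral_eval_mul_iterate_derivative 0 1 ((1 - X) ^ m) (X ^ (b + m)) m
    fun i j hij ↦ by
      rw [eval_mul, eval_mul]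
      exact ⟨mul_eq_zero_of_right _
          (eval_iterate_derivative_eq_zero_of_pow_dvd (by omega) eval_X dvd_rfl),
        mul_eq_zero_of_left
          (eval_iterate_derivative_eq_zero_of_pow_dvd (by omega) (by simp) dvd_rfl) _⟩
  rw [iterate_derivative_X_pow_eq_natCast_mul, iterate_derivative_one_sub_X_pow,
    add_tsub_cancel_right, Nat.descFactorial_self, Nat.sub_self] at hibp
  simp only [eval_mul, eval_pow, eval_neg, eval_sub, eval_one, eval_X, eval_natCast, pow_zero,
    mul_one, integral_const_mul, integral_pow] at hibp
  have hlhs : ∫ x in (0:ℝ)..1, (1 - x) ^ m * ((b + m).descFactorial m * x ^ b)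
      = (b + m).descFactorial m * ∫ x in (0:ℝ)..1, x ^ b * (1 - x) ^ m := by
    rw [← integral_const_mul]
    congr 1 with x
    ring
  have hsign : (-1 : ℝ) ^ m * (-1) ^ m = 1 := by rw [← mul_pow]; norm_num
  have hdesc : ((b + m).descFactorial m : ℝ) ≠ 0 :=
    Nat.cast_ne_zero.2 (Nat.descFactorial_pos.2 (by omega)).ne'
  rw [hlhs, one_pow, zero_pow (succ_ne_zero _), sub_zero] at hibp
  rw [eq_div_iff (by positivity)]
  field_simp at hibp
  push_cast at hibp
  linear_combination hibp + (m ! : ℝ) * hsign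

namespace Polynomial

variable {R : Type*} [CommRing R]

/-- `shiftedJacobi a m` is the Jacobi polynomial `P^{(a,0)}_m(1 - 2X)`. -/
noncomputable def shiftedJacobi (a m : ℕ) : R[X] :=
  ∑ s ∈ range (m + 1),
    C (((a + m).choose (m - s) : R) * (m.choose s : R)) * (-X) ^ s * (1 - X) ^ (m - s)

theorem factorial_mul_X_pow_mul_shiftedJacobi_eq (a m : ℕ) :
    (m ! : R[X]) * (X ^ a * shiftedJacobi a m) = derivative^[m] (X ^ (a + m) * (1 - X) ^ m) := by
  rw [iterate_derivative_mul, shiftedJacobi, mul_sum, mul_sum]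
  refine sum_congr rfl fun i hi ↦ ?_
  have hi : i ≤ m := Nat.lt_succ_iff.1 (mem_range.1 hi)
  have hcoeff : m ! * ((a + m).choose (m - i) * m.choose i)
      = m.choose i * ((a + m).descFactorial (m - i) * m.descFactorial i) := by
    rw [Nat.descFactorial_eq_factorial_mul_choose, Nat.descFactorial_eq_factorial_mul_choose,
      ← Nat.choose_mul_factorial_mul_factorial hi]
    ring
  rw [iterate_derivative_X_pow_eq_natCast_mul, iterate_derivative_one_sub_X_pow,
    show a + m - (m - i) = a + i by omega, nsmul_eq_mul, neg_pow, pow_add, map_mul, map_natCast,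
    map_natCast]
  have := congrArg (Nat.cast : ℕ → R[X]) hcoeff
  push_cast at this ⊢
  linear_combination (X ^ a * X ^ i * (-1) ^ i * (1 - X) ^ (m - i)) * this

theorem natDegree_shiftedJacobi_le (a m : ℕ) : (shiftedJacobi a m : R[X]).natDegree ≤ m := by
  refine natDegree_sum_le_of_forall_le _ _ fun s hs ↦ ?_
  have hs : s ≤ m := Nat.lt_succ_iff.1 (mem_range.1 hs)
  calc _ ≤ s + (m - s) := by compute_degree
    _ = m := by omega

theorem factorial_mul_coeff_shiftedJacobi (a m : ℕ) :
    (m ! : R) * (shiftedJacobi a m).coeff m = (-1) ^ m * (a + 2 * m).descFactorial m := by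
  have h := congrArg (coeff · (a + m)) (factorial_mul_X_pow_mul_shiftedJacobi_eq (R := R) a m)
  simp only [coeff_iterate_derivative, coeff_natCast_mul, coeff_X_pow_mul', le_add_right,
    if_true, Nat.add_sub_cancel_left, show a + m + m - (a + m) = m by omega,
    coeff_one_sub_X_pow_self, nsmul_eq_mul] at h
  rw [h, show a + 2 * m = a + m + m by omega]
  ring

end Polynomial

open intervalIntegral in
theorem integral_X_pow_mul_shiftedJacobi_sq (a m : ℕ) :
    ∫ x in (0:ℝ)..1, x ^ a * (shiftedJacobi a m).eval x ^ 2 = 1 / (a + 2 * m + 1) := by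
  set Q : ℝ[X] := X ^ (a + m) * (1 - X) ^ m
  have hvanish : ∀ x : ℝ, x = 0 ∨ x = 1 → ∀ j < m, (derivative^[j] Q).eval x = 0 := by
    rintro x (rfl | rfl) j hj
    · exact eval_iterate_derivative_eq_zero_of_pow_dvd hj eval_X
        (dvd_mul_of_dvd_left (pow_dvd_pow X (le_add_left le_rfl)) _)
    · exact eval_iterate_derivative_eq_zero_of_pow_dvd hj (by simp) (dvd_mul_left _ _)
  have hibp := integral_eval_mul_iterate_derivative 0 1 (shiftedJacobi a m) Q m fun i j hij ↦ by
    simp only [eval_mul, hvanish 0 (.inl rfl) j (by omega), hvanish 1 (.inr rfl) j (by omega),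
      mul_zero, and_self]
  have hrodrigues : ∀ x : ℝ, x ^ a * (shiftedJacobi a m).eval x ^ 2
      = (m ! : ℝ)⁻¹ * (shiftedJacobi a m * derivative^[m] Q).eval x := by
    intro x
    rw [← factorial_mul_X_pow_mul_shiftedJacobi_eq]
    simp only [eval_mul, eval_natCast, eval_pow, eval_X]
    field_simp
  simp_rw [hrodrigues]
  rw [integral_const_mul, hibp,
    iterate_derivative_eq_C_of_natDegree_le (natDegree_shiftedJacobi_le a m)]
  simp only [eval_mul, eval_C, integral_const_mul, Q, eval_pow, eval_X, eval_sub, eval_one,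
    integral_pow_mul_one_sub_pow, nsmul_eq_mul]
  rw [factorial_mul_coeff_shiftedJacobi, show a + m + m = a + 2 * m by omega]
  have hsign : (-1 : ℝ) ^ m * (-1) ^ m = 1 := by rw [← mul_pow]; norm_num
  have hdesc : ((a + 2 * m).descFactorial m : ℝ) ≠ 0 :=
    Nat.cast_ne_zero.2 (Nat.descFactorial_pos.2 (by omega)).ne'
  field_simp
  push_cast
  linear_combination (a + 2 * m + 1 : ℝ) * hsign

theorem AuxP_eq_X_pow_mul_shiftedJacobi (n k : ℕ) (hk : n ≤ k) :
    AuxP n k = X ^ n * shiftedJacobi (2 * n) (k - n) := by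
  rw [AuxP, shiftedJacobi, show 2 * n + (k - n) = k + n by omega]

/-- Normalization of the auxiliary polynomials. -/
theorem AuxP_norm (n k : ℕ) (hk : n ≤ k) :
    ∫ x in (0:ℝ)..1, (AuxP n k).eval x ^ 2 = 1 / (2 * (k : ℝ) + 1) := by
  have h := integral_X_pow_mul_shiftedJacobi_sq (2 * n) (k - n)
  rw [AuxP_eq_X_pow_mul_shiftedJacobi n k hk]
  convert h using 1
  · simp only [eval_mul, eval_pow, eval_X, mul_pow, ← pow_mul, mul_comm n 2]
  · rw [Nat.cast_sub hk]
    push_cast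
    ring
end

section
/- Let n, k be natural numbers with n ≤ k, let x ∈ (0,1) be real, and let r > 0. Then the auxiliary polynomial admits the contour integral representation P_{n,k}(x) = (1/(2πi)) · x^{−n} · ∮_{|z−x|=r} z^{k+n} (1−z)^{k−n} / (z−x)^{k−n+1} dz, where the integral is taken over the circle of radius r centered at x in the complex plane. -/
open Polynomial

/-!
Writing `z = x + w`, the integrand is `q(w) / w ^ (m + 1)` for the polynomial
`q = taylor x (X ^ (k + n) * (1 - X) ^ (k - n))` and `m = k - n`; only the term `w⁻¹` has a nonzero
integral over the circle, so the integral is `2πi` times the coefficient of `w ^ m` in `q`.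
Expanding `(x + w) ^ (k + n) * ((1 - x) - w) ^ (k - n)` binomially, that coefficient is
`x ^ n * P_{n,k}(x)`.
-/

open Finset Complex Real

theorem circleIntegral_sub_pow_div_sub_pow_succ (c : ℂ) {R : ℝ} (hR : R ≠ 0) (i m : ℕ) :
    (∮ z in C(c, R), (z - c) ^ i / (z - c) ^ (m + 1)) = if i = m then 2 * π * I else 0 := by
  have hzpow : (∮ z in C(c, R), (z - c) ^ i / (z - c) ^ (m + 1)) =
      ∮ z in C(c, R), (z - c) ^ ((i : ℤ) - (m + 1 : ℕ)) := by
    simp only [circleIntegral]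
    congr! 3 with θ
    rw [zpow_sub₀ (sub_ne_zero.2 (circleMap_ne_center hR)), zpow_natCast, zpow_natCast]
  rw [hzpow]
  split_ifs with him
  · simp [him, circleIntegral.integral_sub_center_inv c hR]
  · exact circleIntegral.integral_sub_zpow_of_ne (by omega) c c R

theorem circleIntegrable_eval_sub_div_sub_pow (q : ℂ[X]) (c : ℂ) {R : ℝ} (hR : R ≠ 0) (m : ℕ) :
    CircleIntegrable (fun z ↦ q.eval (z - c) / (z - c) ^ m) c R := by
  refine ContinuousOn.circleIntegrable' ?_
  refine (q.continuous.comp (continuous_sub_right c)).continuousOn.div (by fun_prop) ?_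
  intro z hz
  refine pow_ne_zero _ (sub_ne_zero.2 ?_)
  rintro rfl
  simp [eq_comm, hR] at hz

theorem circleIntegral_eval_sub_div_sub_pow_succ (q : ℂ[X]) (c : ℂ) {R : ℝ} (hR : R ≠ 0)
    (m : ℕ) : (∮ z in C(c, R), q.eval (z - c) / (z - c) ^ (m + 1)) = 2 * π * I * q.coeff m := by
  induction q using Polynomial.induction_on' with
  | add p q hp hq =>
    simp only [eval_add, add_div]
    rw [circleIntegral.integral_add (circleIntegrable_eval_sub_div_sub_pow p c hR _)
      (circleIntegrable_eval_sub_div_sub_pow q c hR _), hp, hq, coeff_add, mul_add]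
  | monomial i a =>
    simp only [eval_monomial, mul_div_assoc, circleIntegral.integral_const_mul,
      circleIntegral_sub_pow_div_sub_pow_succ c hR, coeff_monomial]
    split_ifs <;> ring

theorem circleIntegral_eval_div_sub_pow_succ (p : ℂ[X]) (c : ℂ) {R : ℝ} (hR : R ≠ 0) (m : ℕ) :
    (∮ z in C(c, R), p.eval z / (z - c) ^ (m + 1)) = 2 * π * I * (taylor c p).coeff m := by
  simpa only [taylor_eval_sub] using circleIntegral_eval_sub_div_sub_pow_succ (taylor c p) c hR m

theorem coeff_C_sub_X_pow {R : Type*} [CommRing R] (a : R) (m s : ℕ) :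
    ((C a - X) ^ m).coeff s = (-1) ^ s * a ^ (m - s) * m.choose s := by
  have h : C a - X = C (-1) * (X + C (-a)) := by simp only [C_neg, C_1]; ring
  rw [h, mul_pow, ← C_pow, coeff_C_mul, coeff_X_add_C_pow]
  rcases le_or_gt s m with hsm | hms
  · obtain ⟨t, rfl⟩ := Nat.exists_eq_add_of_le hsm
    rw [Nat.add_sub_cancel_left, neg_pow a, pow_add]
    have h1 : ((-1 : R) ^ t) * (-1) ^ t = 1 := by rw [← mul_pow]; simp
    linear_combination ((-1) ^ s * a ^ t * ((s + t).choose s : R)) * h1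
  · simp [Nat.choose_eq_zero_of_lt hms]

theorem coeff_taylor_X_pow_mul_one_sub_X_pow {R : Type*} [CommRing R] (c : R) (K m j : ℕ) :
    (taylor c (X ^ K * (1 - X) ^ m)).coeff j =
      ∑ s ∈ range (j + 1),
        c ^ (K - (j - s)) * K.choose (j - s) * ((-1) ^ s * (1 - c) ^ (m - s) * m.choose s) := by
  have h : taylor c (1 - X) = C (1 - c) - X := by
    rw [map_sub, taylor_one, taylor_X, C_sub, C_1]; ring
  rw [taylor_mul, taylor_pow, taylor_pow, taylor_X, h, coeff_mul,
    ← Nat.sum_antidiagonal_swap, Nat.sum_antidiagonal_eq_sum_range_succ_mk]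
  simp only [Prod.swap_prod_mk, coeff_X_add_C_pow, coeff_C_sub_X_pow]

theorem coeff_taylor_eq_pow_mul_eval_AuxP {n k : ℕ} (hnk : n ≤ k) (x : ℝ) :
    (taylor x (X ^ (k + n) * (1 - X) ^ (k - n))).coeff (k - n) = x ^ n * (AuxP n k).eval x := by
  simp only [coeff_taylor_X_pow_mul_one_sub_X_pow, AuxP, eval_mul, eval_pow, eval_X,
    eval_finsetSum, eval_C, eval_neg, eval_sub, eval_one, mul_sum]
  refine sum_congr rfl fun s hs ↦ ?_
  rw [show k + n - (k - n - s) = n + n + s by simp at hs; omega, pow_add, pow_add, neg_pow]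
  ring

theorem AuxP_contour_integral_general (n k : ℕ) (hnk : n ≤ k) (x : ℝ) (r : ℝ) (hr : 0 < r) :
    (((AuxP n k).eval x : ℝ) : ℂ) =
      (1 / (2 * Real.pi * Complex.I)) * ((x : ℂ) ^ n)⁻¹ *
        ∮ z in C((x : ℂ), r),
          z ^ (k + n) * (1 - z) ^ (k - n) / (z - (x : ℂ)) ^ (k - n + 1) := by
  have hcoeff : (taylor (x : ℂ) (X ^ (k + n) * (1 - X) ^ (k - n))).coeff (k - n) =
      ((x ^ n * (AuxP n k).eval x : ℝ) : ℂ) := by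
    rw [← coeff_taylor_eq_pow_mul_eval_AuxP hnk, coeff_taylor_X_pow_mul_one_sub_X_pow,
      coeff_taylor_X_pow_mul_one_sub_X_pow]
    push_cast
    rfl
  have hintegral := circleIntegral_eval_div_sub_pow_succ
    (X ^ (k + n) * (1 - X) ^ (k - n)) x hr.ne' (k - n)
  simp only [eval_mul, eval_pow, eval_X, eval_sub, eval_one, hcoeff] at hintegral
  -- `X ^ n ∣ AuxP n k` makes the junk value `(0 ^ n)⁻¹ = 0` harmless at `x = 0`.
  obtain ⟨s, hs⟩ : x ^ n ∣ (AuxP n k).eval x := by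
    simpa only [eval_pow, eval_X] using eval_dvd (x := x) (⟨_, rfl⟩ : X ^ n ∣ AuxP n k)
  rw [hintegral, hs]
  have h2πI : 2 * (π : ℂ) * I ≠ 0 := by simp [pi_ne_zero]
  push_cast
  field_simp

/-- Contour integral representation of the auxiliary polynomials. -/
theorem AuxP_contour_integral (n k : ℕ) (hnk : n ≤ k) (x : ℝ)
    (hx : x ∈ Set.Ioo (0:ℝ) 1) (r : ℝ) (hr : 0 < r) :
    (((AuxP n k).eval x : ℝ) : ℂ) =
      (1 / (2 * Real.pi * Complex.I)) * ((x : ℂ) ^ n)⁻¹ *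
        ∮ z in C((x : ℂ), r),
          z ^ (k + n) * (1 - z) ^ (k - n) / (z - (x : ℂ)) ^ (k - n + 1) :=
  AuxP_contour_integral_general n k hnk x r hr
end

section
/- Let n, k be natural numbers with k ≤ n, let x ∈ (0,1) be real, and let r be a real number with 0 < r < 1/x. Then the alternative Legendre polynomial admits the contour integral representation 𝒫_{n,k}(x) = (1/(2πi)) · x^{−(n+2)} · ∮_{|z−1/x|=r} z^{−(n+k+2)} (1−z)^{n−k} / (z−1/x)^{n−k+1} dz, where the integral is taken over the circle of radius r centered at 1/x in the complex plane (which does not enclose z = 0). -/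
/-!
Expand `(1 - z) ^ (n - k)` binomially. Up to a constant, each resulting term is
`z ^ (-(s + 1)) / (z - c) ^ (m + 1)` with `c = 1 / x` and `m = n - k`. The disc does not
contain `0`, so `z ^ (-(s + 1))` is holomorphic on it and Cauchy's formula for the `m`-th
derivative gives the integral `2πi (-1) ^ m C(s + m, m) c ^ (-(s + m + 1))`. Collecting the
terms yields exactly the coefficients of `𝒫_{n,k}`.
-/

open Polynomial

open Complex Metric Finset Nat Real

theorem prod_range_neg_natCast_add_one_sub {R : Type*} [CommRing R] (s m : ℕ) :
    ∏ i ∈ range m, (-(s + 1 : R) - i) = (-1) ^ m * (m ! * (s + m).choose m : ℕ) := by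
  rw [← ascFactorial_eq_factorial_mul_choose, ascFactorial_eq_prod_range, Nat.cast_prod,
    show (-1 : R) ^ m = (-1) ^ #(range m) by rw [card_range], pow_card_mul_prod]
  refine prod_congr rfl fun i _ => ?_
  push_cast
  ring

section CircleIntegral

variable {c : ℂ} {R : ℝ}

theorem circleIntegral_zpow_div_sub_center_pow (hR : 0 < R) (h0 : 0 ∉ closedBall c R)
    (p : ℤ) (m : ℕ) :
    ∮ z in C(c, R), z ^ p / (z - c) ^ (m + 1) =
      2 * π * I / m ! * ((∏ i ∈ range m, ((p : ℂ) - i)) * c ^ (p - m)) := by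
  have hd : DifferentiableOn ℂ (fun z : ℂ => z ^ p) (closedBall c R) := fun z hz =>
    (differentiableAt_zpow.mpr (Or.inl (ne_of_mem_of_not_mem hz h0))).differentiableWithinAt
  rw [← iter_deriv_zpow, ← iteratedDeriv_eq_iterate, ← smul_eq_mul,
    ← hd.circleIntegral_one_div_sub_center_pow_smul hR m]
  simp only [smul_eq_mul, one_div_mul_eq_div]

theorem circleIntegral_zpow_neg_succ_div_sub_center_pow (hR : 0 < R)
    (h0 : 0 ∉ closedBall c R) (s m : ℕ) :
    ∮ z in C(c, R), z ^ (-(s + 1 : ℤ)) / (z - c) ^ (m + 1) =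
      2 * π * I * ((-1) ^ m * (s + m).choose m * (c ^ (s + m + 1))⁻¹) := by
  have hc : c ≠ 0 := fun h => h0 (h ▸ mem_closedBall_self hR.le)
  have hm : (m ! : ℂ) ≠ 0 := mod_cast m.factorial_ne_zero
  rw [circleIntegral_zpow_div_sub_center_pow hR h0]
  push_cast
  rw [prod_range_neg_natCast_add_one_sub,
    show -((s : ℤ) + 1) - m = -((s + m + 1 : ℕ) : ℤ) by push_cast; ring, zpow_neg,
    zpow_natCast]
  push_cast
  field_simp

theorem circleIntegral_zpow_mul_one_sub_pow_div_sub_center_pow (hR : 0 < R)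
    (h0 : 0 ∉ closedBall c R) (s m : ℕ) :
    ∮ z in C(c, R), z ^ (-(s + m + 1 : ℤ)) * (1 - z) ^ m / (z - c) ^ (m + 1) =
      2 * π * I * ∑ j ∈ range (m + 1),
        (-1) ^ j * m.choose j * (s + j + m).choose m * (c ^ (s + j + m + 1))⁻¹ := by
  have hexpand : Set.EqOn (fun z => z ^ (-(s + m + 1 : ℤ)) * (1 - z) ^ m / (z - c) ^ (m + 1))
      (fun z => ∑ j ∈ range (m + 1),
        (-1) ^ (j + m) * m.choose j * (z ^ (-((s + j : ℕ) + 1 : ℤ)) / (z - c) ^ (m + 1)))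
      (sphere c R) := by
    intro z hz
    have hz : z ≠ 0 := ne_of_mem_of_not_mem (sphere_subset_closedBall hz) h0
    simp only [sub_pow, one_pow, mul_one, mul_sum, sum_div]
    refine sum_congr rfl fun j hj => ?_
    have hjm : j ≤ m := Nat.lt_succ_iff.mp (mem_range.mp hj)
    rw [show -((s + j : ℕ) + 1 : ℤ) = -(s + m + 1 : ℤ) + (m - j : ℕ) by
      push_cast [hjm]; ring, zpow_add₀ hz, zpow_natCast]
    ring
  have hintegrable (j : ℕ) : CircleIntegrable
      (fun z => (-1) ^ (j + m) * m.choose j *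
        (z ^ (-((s + j : ℕ) + 1 : ℤ)) / (z - c) ^ (m + 1))) c R := by
    refine ContinuousOn.circleIntegrable hR.le fun z hz => ?_
    have hz0 : z ≠ 0 := ne_of_mem_of_not_mem (sphere_subset_closedBall hz) h0
    have hzc : z - c ≠ 0 := sub_ne_zero.mpr (ne_of_mem_sphere hz hR.ne')
    fun_prop (disch := simp [hz0, hzc])
  rw [circleIntegral.integral_congr hR.le hexpand,
    circleIntegral.integral_fun_sum fun j _ => hintegrable j, mul_sum]
  refine sum_congr rfl fun j _ => ?_
  have hsign : (-1 : ℂ) ^ (j + m) * (-1) ^ m = (-1) ^ j := by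
    rw [pow_add, mul_assoc, ← mul_pow]
    norm_num
  rw [circleIntegral.integral_const_mul, circleIntegral_zpow_neg_succ_div_sub_center_pow hR h0,
    ← hsign]
  ring

end CircleIntegral

/-- Contour integral representation of the alternative Legendre polynomials:
the contour is the circle of radius r centered at 1/x, with 0 < r < 1/x, so it
does not enclose z = 0. -/
theorem ALP_contour_integral (n k : ℕ) (hk : k ≤ n) (x : ℝ)
    (hx : x ∈ Set.Ioo (0:ℝ) 1) (r : ℝ) (hr0 : 0 < r) (hr1 : r < 1 / x) :
    (((ALP n k).eval x : ℝ) : ℂ) =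
      (1 / (2 * Real.pi * Complex.I)) * ((x : ℂ) ^ (n + 2))⁻¹ *
        ∮ z in C((1 / (x : ℂ)), r),
          z ^ (-((n : ℤ) + k + 2)) * (1 - z) ^ (n - k) /
            (z - 1 / (x : ℂ)) ^ (n - k + 1) := by
  have hx0 : (x : ℂ) ≠ 0 := ofReal_ne_zero.mpr hx.1.ne'
  have h0 : (0 : ℂ) ∉ closedBall (1 / (x : ℂ)) r := by
    rw [mem_closedBall, _root_.dist_zero_left, ← ofReal_one, ← ofReal_div, norm_real,
      Real.norm_of_nonneg (by linarith)]
    exact not_le.mpr hr1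
  obtain ⟨m, rfl⟩ := Nat.exists_eq_add_of_le hk
  rw [show -(((k + m : ℕ) : ℤ) + k + 2) = -(((2 * k + 1 : ℕ) : ℤ) + m + 1) by
      push_cast; ring,
    Nat.add_sub_cancel_left, circleIntegral_zpow_mul_one_sub_pow_div_sub_center_pow hr0 h0,
    mul_sum, mul_sum]
  simp only [ALP, Nat.add_sub_cancel_left, eval_finsetSum, eval_mul, eval_C, eval_pow, eval_X,
    ofReal_sum]
  refine sum_congr rfl fun j _ => ?_
  rw [one_div (x : ℂ), inv_pow, inv_inv,
    show 2 * k + 1 + j + m + 1 = (k + m + 2) + (k + j) by ring, pow_add,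
    show k + m + k + 1 + j = 2 * k + 1 + j + m by ring]
  field_simp [two_pi_I_ne_zero]
  push_cast
  ring
end
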